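/- arXiv:2309.09254 — 5 statements merged into one kernel-verified Lean document; each statement's English description precedes it below -/
import Mathlib

section
/- For every integer r ≥ 1, the alternating sum ∑_{i=0}^{2r} (-1)^i C(r, ⌊i/2⌋) C(r, ⌊(i+1)/2⌋) equals the r-th Catalan number (1/(r+1)) C(2r, r). -/
open Finset

lemma sum_range_two_mul_pair (f : ℕ → ℚ) (n : ℕ) :
    ∑ i ∈ Finset.range (2 * n), f i
      = ∑ k ∈ Finset.range n, (f (2 * k) + f (2 * k + 1)) := by
  induction n with
  | zero => simp
  | succ n ih =>
    have h2 : 2 * (n + 1) = 2 * n + 1 + 1 := by ring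
    rw [h2, Finset.sum_range_succ, Finset.sum_range_succ, ih, Finset.sum_range_succ]
    ring

lemma vandermonde_sq (r : ℕ) :
    ∑ k ∈ Finset.range (r + 1), r.choose k * r.choose k = (2 * r).choose r := by
  rw [two_mul, Nat.add_choose_eq, Finset.Nat.sum_antidiagonal_eq_sum_range_succ_mk]
  refine Finset.sum_congr rfl fun k hk => ?_
  rw [Finset.mem_range] at hk
  rw [Nat.choose_symm (by omega)]

lemma vandermonde_adj (r : ℕ) (hr : 1 ≤ r) :
    ∑ k ∈ Finset.range r, r.choose k * r.choose (k + 1) = (2 * r).choose (r - 1) := by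
  rw [two_mul, Nat.add_choose_eq, Finset.Nat.sum_antidiagonal_eq_sum_range_succ_mk]
  have hr1 : r - 1 + 1 = r := by omega
  rw [Nat.succ_eq_add_one, hr1]
  refine Finset.sum_congr rfl fun k hk => ?_
  rw [Finset.mem_range] at hk
  have h2 : r - 1 - k = r - (k + 1) := by omega
  rw [h2, Nat.choose_symm (by omega)]

theorem alternating_sum_eq_catalan (r : ℕ) (hr : 1 ≤ r) :
    ∑ i ∈ Finset.range (2 * r + 1),
      (-1 : ℚ) ^ i * (r.choose (i / 2)) * (r.choose ((i + 1) / 2)) =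
    ((2 * r).choose r : ℚ) / (r + 1) := by
  rw [Finset.sum_range_succ, sum_range_two_mul_pair]
  have hpair : ∀ k ∈ Finset.range r,
      ((-1 : ℚ) ^ (2 * k) * (r.choose ((2 * k) / 2)) * (r.choose ((2 * k + 1) / 2))
        + (-1 : ℚ) ^ (2 * k + 1) * (r.choose ((2 * k + 1) / 2)) *
          (r.choose ((2 * k + 1 + 1) / 2)))
      = (r.choose k : ℚ) * (r.choose k) - (r.choose k : ℚ) * (r.choose (k + 1)) := by
    intro k _
    have e1 : (2 * k) / 2 = k := by omega
    have e2 : (2 * k + 1) / 2 = k := by omega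
    have e3 : (2 * k + 1 + 1) / 2 = k + 1 := by omega
    rw [e1, e2, e3, pow_succ, pow_mul, neg_one_sq, one_pow]
    ring
  rw [Finset.sum_congr rfl hpair]
  have e4 : (2 * r) / 2 = r := by omega
  have e5 : (2 * r + 1) / 2 = r := by omega
  rw [e4, e5, pow_mul, neg_one_sq, one_pow, Nat.choose_self]
  have hA : (∑ k ∈ Finset.range r, (r.choose k : ℚ) * (r.choose k)) + 1
      = ((2 * r).choose r : ℚ) := by
    have h := vandermonde_sq r
    rw [Finset.sum_range_succ, Nat.choose_self] at h
    have h' := congrArg (Nat.cast : ℕ → ℚ) h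
    push_cast at h'
    exact h'
  have hB : (∑ k ∈ Finset.range r, (r.choose k : ℚ) * (r.choose (k + 1)))
      = ((2 * r).choose (r - 1) : ℚ) := by
    have h' := congrArg (Nat.cast : ℕ → ℚ) (vandermonde_adj r hr)
    push_cast at h'
    exact h'
  have hC : ((2 * r).choose r : ℚ) * r = ((2 * r).choose (r - 1) : ℚ) * (r + 1) := by
    have h := Nat.choose_succ_right_eq (2 * r) (r - 1)
    have hr1 : r - 1 + 1 = r := by omega
    have hr2 : 2 * r - (r - 1) = r + 1 := by omega
    rw [hr1, hr2] at h
    have h' := congrArg (Nat.cast : ℕ → ℚ) h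
    push_cast at h'
    exact h'
  have hr0 : (r : ℚ) + 1 ≠ 0 := by positivity
  rw [Finset.sum_sub_distrib, eq_div_iff hr0]
  push_cast
  linear_combination ((r : ℚ) + 1) * hA - ((r : ℚ) + 1) * hB + hC
end

section
/- For every integer r ≥ 0, ∑_{j=0}^{r} (-1)^{r+j} C(r+1, r-j) · 2^j · (2^{j+1} − 1) = (3^{r+1} − 1)/2. -/
open Finset

lemma key_binom (x : ℚ) (n : ℕ) :
    ∑ j ∈ Finset.range (n + 1),
      (-1 : ℚ) ^ (n + j) * ((n + 1).choose (n - j)) * x ^ (j + 1)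
      = (x - 1) ^ (n + 1) - (-1 : ℚ) ^ (n + 1) := by
  have h1 := Finset.sum_range_reflect
    (fun k => (-1 : ℚ) ^ (n + (n - k)) * ((n + 1).choose k) * x ^ (n - k + 1)) (n + 1)
  simp only [Nat.add_sub_cancel] at h1
  have hL : ∑ j ∈ Finset.range (n + 1),
      (-1 : ℚ) ^ (n + j) * ((n + 1).choose (n - j)) * x ^ (j + 1)
      = ∑ k ∈ Finset.range (n + 1),
        (-1 : ℚ) ^ (n + (n - k)) * ((n + 1).choose k) * x ^ (n - k + 1) := by
    rw [← h1]
    apply Finset.sum_congr rfl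
    intro j hj
    have hjn : j ≤ n := Nat.lt_succ_iff.mp (Finset.mem_range.mp hj)
    rw [Nat.sub_sub_self hjn]
  rw [hL]
  have hR : ∑ k ∈ Finset.range (n + 1),
      (-1 : ℚ) ^ (n + (n - k)) * ((n + 1).choose k) * x ^ (n - k + 1)
      = ∑ k ∈ Finset.range (n + 1),
        (-1 : ℚ) ^ k * x ^ (n + 1 - k) * ((n + 1).choose k) := by
    apply Finset.sum_congr rfl
    intro k hk
    have hkn : k ≤ n := Nat.lt_succ_iff.mp (Finset.mem_range.mp hk)
    have hs : (-1 : ℚ) ^ (n + (n - k)) = (-1 : ℚ) ^ k := by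
      have h1 : (-1 : ℚ) ^ (n + (n - k)) * (-1 : ℚ) ^ k = 1 := by
        rw [← pow_add, show n + (n - k) + k = 2 * n from by omega, pow_mul]
        norm_num
      have h2 : (-1 : ℚ) ^ k * (-1 : ℚ) ^ k = 1 := by
        rw [← pow_add, show k + k = 2 * k from by omega, pow_mul]
        norm_num
      calc (-1 : ℚ) ^ (n + (n - k))
          = (-1 : ℚ) ^ (n + (n - k)) * ((-1 : ℚ) ^ k * (-1 : ℚ) ^ k) := by rw [h2, mul_one]
        _ = ((-1 : ℚ) ^ (n + (n - k)) * (-1 : ℚ) ^ k) * (-1 : ℚ) ^ k := by ring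
        _ = (-1 : ℚ) ^ k := by rw [h1, one_mul]
    have he : n - k + 1 = n + 1 - k := by omega
    rw [hs, he]
    ring
  rw [hR]
  have hap := add_pow (-1 : ℚ) x (n + 1)
  rw [Finset.sum_range_succ] at hap
  simp only [Nat.choose_self, Nat.sub_self, pow_zero, Nat.cast_one, mul_one, one_mul] at hap
  have hx : (-1 : ℚ) + x = x - 1 := by ring
  rw [hx] at hap
  have : ∑ k ∈ Finset.range (n + 1),
      (-1 : ℚ) ^ k * x ^ (n + 1 - k) * ((n + 1).choose k)
      = (x - 1) ^ (n + 1) - (-1 : ℚ) ^ (n + 1) := by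
    rw [hap]; ring
  rw [this]

theorem gEDdeg_formula (r : ℕ) :
    ∑ j ∈ Finset.range (r + 1),
      (-1 : ℚ) ^ (r + j) * ((r + 1).choose (r - j)) * 2 ^ j * (2 ^ (j + 1) - 1) =
    (3 ^ (r + 1) - 1) / 2 := by
  have h4 := key_binom 4 r
  have h2 := key_binom 2 r
  have hsplit : ∑ j ∈ Finset.range (r + 1),
      (-1 : ℚ) ^ (r + j) * ((r + 1).choose (r - j)) * 2 ^ j * (2 ^ (j + 1) - 1)
      = (∑ j ∈ Finset.range (r + 1),
          (-1 : ℚ) ^ (r + j) * ((r + 1).choose (r - j)) * (4 : ℚ) ^ (j + 1)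
        - ∑ j ∈ Finset.range (r + 1),
          (-1 : ℚ) ^ (r + j) * ((r + 1).choose (r - j)) * (2 : ℚ) ^ (j + 1)) / 2 := by
    rw [← Finset.sum_sub_distrib, Finset.sum_div]
    apply Finset.sum_congr rfl
    intro j _
    have h4j : (4 : ℚ) ^ (j + 1) = 2 ^ j * 2 ^ j * 4 := by
      rw [pow_succ, show (4 : ℚ) = 2 * 2 by norm_num, mul_pow]
    rw [h4j, pow_succ]
    ring
  rw [hsplit, h4, h2]
  norm_num
end

section
/- Define d_i(r) = ∑_{k=0}^{i} C(k, i−k) · C(r, k) · Catalan(k), where Catalan(k) = (1/(k+1)) C(2k,k). Then for every r ≥ 0, d_{2r}(r) = Catalan(r). -/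
open Finset

/-- Catalan number as a rational: `(1/(k+1)) C(2k,k)`. -/
def cat (k : ℕ) : ℚ := ((2 * k).choose k : ℚ) / (k + 1)

/-- Conjectured projective degrees of the gradient map. -/
def d (i r : ℕ) : ℚ :=
  ∑ k ∈ Finset.range (i + 1), (k.choose (i - k) : ℚ) * (r.choose k : ℚ) * cat k

theorem d_top_eq_catalan (r : ℕ) : d (2 * r) r = cat r := by
  unfold d
  rw [Finset.sum_eq_single_of_mem r (by simp [Nat.lt_succ_iff]; omega)]
  · simp [Nat.two_mul, Nat.add_sub_cancel]
  · intro k hk hne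
    rcases lt_or_gt_of_ne hne with h | h
    · have : k < 2 * r - k := by omega
      rw [Nat.choose_eq_zero_of_lt this]
      simp
    · rw [Nat.choose_eq_zero_of_lt h]
      simp
end

section
/- For integers s ≥ 1, c ≥ 0 and 0 ≤ q ≤ c, the identity (s+1)·C(s+1+c, c)·C(c, q) + s·C(s+c, c)·C(c, q+1) = C(s+c, c)·(q+s+1)·C(s+1+c, c)/(s+1) holds; equivalently, (s+1)·C(s+1+c,c)·C(c,q) + s·C(s+c,c)·C(c,q+1) is divisible appropriately so that the Eagon–Northcott recursion F_{s+1,c}(t) − F_{s,c}(t) = C(c+s,s)·t^s·(1−t)^{c+1} is verified coefficientwise. -/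
open Polynomial Finset

noncomputable def F (s c : ℕ) : Polynomial ℚ :=
  1 - Polynomial.C ((s : ℚ) * ((s + c).choose c : ℚ)) *
      ∑ q ∈ Finset.range (c + 1),
        Polynomial.C ((-1 : ℚ) ^ q * (c.choose q : ℚ) / (q + s)) * Polynomial.X ^ (q + s)

lemma binom_expand (c : ℕ) :
    (1 - Polynomial.X : Polynomial ℚ) ^ c =
      ∑ q ∈ Finset.range (c + 1),
        Polynomial.C ((-1 : ℚ) ^ q * (c.choose q : ℚ)) * Polynomial.X ^ q := by
  have h : (1 - Polynomial.X : Polynomial ℚ) = (-Polynomial.X) + 1 := by ring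
  rw [h, add_pow]
  apply Finset.sum_congr rfl
  intro q hq
  rw [neg_pow]
  simp only [map_mul, map_pow, map_neg, map_one, Polynomial.C_eq_natCast]
  ring

lemma deriv_F (s c : ℕ) (hs : 1 ≤ s) :
    Polynomial.derivative (F s c) =
      - Polynomial.C ((s : ℚ) * ((s + c).choose c : ℚ)) *
        (Polynomial.X ^ (s - 1) * (1 - Polynomial.X) ^ c) := by
  obtain ⟨n, rfl⟩ := Nat.exists_eq_add_of_le hs
  simp only [Nat.add_sub_cancel_left] at *
  unfold F
  rw [derivative_sub, derivative_one, derivative_C_mul, derivative_sum]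
  rw [binom_expand, zero_sub, neg_mul, neg_inj]
  rw [Finset.mul_sum, Finset.mul_sum, Finset.mul_sum]
  apply Finset.sum_congr rfl
  intro q hq
  rw [derivative_C_mul, derivative_X_pow]
  have h2 : q + (1 + n) - 1 = q + n := by omega
  rw [h2]
  congr 1
  rw [← mul_assoc, ← Polynomial.C_mul]
  have hq1 : ((q : ℚ) + ((1 + n : ℕ) : ℚ)) ≠ 0 := by push_cast; positivity
  have hval : (-1 : ℚ) ^ q * (c.choose q : ℚ) / ((q : ℚ) + ((1 + n : ℕ) : ℚ)) *
      (((q + (1 + n) : ℕ)) : ℚ) = (-1 : ℚ) ^ q * (c.choose q : ℚ) := by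
    rw [div_mul_eq_mul_div, mul_div_assoc]
    rw [show (((q + (1 + n) : ℕ)) : ℚ) = (q : ℚ) + ((1 + n : ℕ) : ℚ) by push_cast; ring]
    rw [div_self hq1, mul_one]
  rw [hval, show q + n = n + q by omega, pow_add]
  ring

theorem eagon_northcott_recursion (s c : ℕ) (hs : 1 ≤ s) :
    F (s + 1) c - F s c =
      Polynomial.C (((c + s).choose s : ℚ)) * Polynomial.X ^ s *
        (1 - Polynomial.X) ^ (c + 1) := by
  set R : Polynomial ℚ := Polynomial.C (((c + s).choose s : ℚ)) * Polynomial.X ^ s *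
        (1 - Polynomial.X) ^ (c + 1) with hR
  set P : Polynomial ℚ := F (s + 1) c - F s c - R with hP
  have hb : (c + s).choose s = (s + c).choose c := by
    rw [Nat.add_comm c s, Nat.choose_symm_add]
  have key : ((s + 1 : ℕ) : ℚ) * (((s + 1 + c).choose c : ℚ)) =
      ((s : ℚ) + (c : ℚ) + 1) * (((s + c).choose c : ℚ)) := by
    have h4 : (s + 1 + c).choose c = (s + 1 + c).choose (s + 1) := by
      have h := Nat.choose_symm (show s + 1 ≤ s + 1 + c by omega)
      rwa [show s + 1 + c - (s + 1) = c by omega] at h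
    have h2 : (s + c).choose c = (s + c).choose s := by
      have h := Nat.choose_symm (show s ≤ s + c by omega)
      rwa [show s + c - s = c by omega] at h
    have h1 := Nat.add_one_mul_choose_eq (s + c) s
    have hnat : (s + 1) * ((s + 1 + c).choose c) = (s + c + 1) * ((s + c).choose c) := by
      calc (s + 1) * ((s + 1 + c).choose c)
          = (s + c + 1).choose (s + 1) * (s + 1) := by
            rw [h4, show s + 1 + c = s + c + 1 by omega, mul_comm]
        _ = (s + c + 1) * ((s + c).choose s) := h1.symm
        _ = (s + c + 1) * ((s + c).choose c) := by rw [h2]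
    have hcast := congrArg (fun m : ℕ => (m : ℚ)) hnat
    push_cast at hcast ⊢
    linarith [hcast]
  have hderiv : Polynomial.derivative P = 0 := by
    rw [hP, derivative_sub, derivative_sub, deriv_F _ c (by omega), deriv_F _ c hs, hR]
    rw [derivative_mul, derivative_mul, derivative_C, derivative_X_pow, derivative_pow,
      derivative_sub, derivative_one, derivative_X]
    simp only [Nat.add_sub_cancel]
    rw [hb, key]
    obtain ⟨n, rfl⟩ := Nat.exists_eq_add_of_le hs
    simp only [Nat.add_sub_cancel_left]
    have hx : (Polynomial.X : Polynomial ℚ) ^ (1 + n) = Polynomial.X * Polynomial.X ^ n := by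
      rw [pow_add, pow_one]
    have hx2 : (1 - Polynomial.X : Polynomial ℚ) ^ (c + 1) =
        (1 - Polynomial.X) * (1 - Polynomial.X) ^ c := by
      rw [pow_succ]; ring
    rw [hx, hx2]
    simp only [map_mul, map_add, map_one, Polynomial.C_eq_natCast]
    push_cast
    ring
  have hconst : P.natDegree = 0 := Polynomial.natDegree_eq_zero_of_derivative_eq_zero hderiv
  have hPC : P = Polynomial.C (P.coeff 0) := Polynomial.eq_C_of_natDegree_eq_zero hconst
  have heval : P.eval 0 = 0 := by
    rw [hP, hR]
    have hFeval : ∀ t : ℕ, 1 ≤ t → (F t c).eval 0 = 1 := by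
      intro t ht
      unfold F
      rw [Polynomial.eval_sub, Polynomial.eval_one, Polynomial.eval_mul, Polynomial.eval_C,
        Polynomial.eval_finset_sum]
      have h0 : ∀ q ∈ Finset.range (c + 1),
          (Polynomial.C ((-1 : ℚ) ^ q * (c.choose q : ℚ) / (q + t)) *
            Polynomial.X ^ (q + t)).eval 0 = 0 := by
        intro q hq
        rw [Polynomial.eval_mul, Polynomial.eval_pow, Polynomial.eval_X,
          zero_pow (by omega), mul_zero]
      rw [Finset.sum_congr rfl h0, Finset.sum_const_zero, mul_zero, sub_zero]
    rw [Polynomial.eval_sub, Polynomial.eval_sub, hFeval _ (by omega), hFeval _ hs]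
    rw [Polynomial.eval_mul, Polynomial.eval_mul, Polynomial.eval_pow, Polynomial.eval_X,
      zero_pow (by omega), mul_zero, zero_mul]
    ring
  have hc0 : P.coeff 0 = 0 := by
    have he := Polynomial.eval_C (a := P.coeff 0) (x := (0 : ℚ))
    rw [← hPC] at he
    rw [← he, heval]
  have hP0 : P = 0 := by rw [hPC, hc0, map_zero]
  have h0 : F (s + 1) c - F s c - R = 0 := by rw [← hP]; exact hP0
  rw [sub_eq_zero] at h0
  exact h0
end

section
/- For all integers c ≥ 0 and s ≥ 1, the polynomial identity (1−t)^{c+1} · (∑_{j=0}^{s−1} C(c+j, j) t^j) = 1 − s·C(s+c,c)·∑_{q=0}^{c} (−1)^q C(c,q) t^{q+s}/(q+s) holds in ℚ[t]. -/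
open Polynomial Finset

lemma one_sub_X_pow (c : ℕ) :
    ((1 - X : ℚ[X])) ^ c =
      ∑ q ∈ Finset.range (c + 1), Polynomial.C ((-1 : ℚ) ^ q * (c.choose q : ℚ)) * X ^ q := by
  rw [sub_eq_add_neg, add_comm, add_pow]
  refine Finset.sum_congr rfl fun q hq => ?_
  rw [neg_pow, one_pow, mul_one, map_mul]
  push_cast
  rw [C_eq_natCast]
  push_cast
  ring_nf
  simp [map_pow]

lemma Gkey (c : ℕ) : ∀ s : ℕ, 1 ≤ s →
    (1 - X) * derivative (∑ j ∈ Finset.range s, Polynomial.C (((c + j).choose j : ℚ)) * X ^ j)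
      - ((c : ℚ[X]) + 1) * ∑ j ∈ Finset.range s, Polynomial.C (((c + j).choose j : ℚ)) * X ^ j
    = -((s * ((s + c).choose c) : ℕ) : ℚ[X]) * X ^ (s - 1) := by
  refine Nat.le_induction ?_ ?_
  · simp [Nat.add_comm 1 c, Nat.choose_succ_self_right]
  · rintro s hs ih
    obtain ⟨m, rfl⟩ : ∃ m, s = m + 1 := ⟨s - 1, (Nat.succ_pred_eq_of_pos hs).symm⟩
    rw [Finset.sum_range_succ, derivative_add, derivative_C_mul, derivative_X_pow]
    have h1 : (m + 1 + c).choose c = (c + (m + 1)).choose (m + 1) := by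
      rw [Nat.add_comm (m + 1) c, Nat.choose_symm_add]
    have h2 : (m + 1 + 1) * ((m + 1 + 1 + c).choose c) =
        (c + m + 2) * ((c + (m + 1)).choose (m + 1)) := by
      have e1 : (m + 1 + 1 + c).choose c = (c + m + 2).choose (m + 2) := by
        rw [show m + 1 + 1 + c = c + (m + 2) by omega, Nat.choose_symm_add]
        exact rfl
      have h3 := Nat.add_one_mul_choose_eq (c + m + 1) (m + 1)
      rw [e1, mul_comm]
      exact h3.symm
    rw [h2]
    rw [h1] at ih
    simp only [Nat.add_sub_cancel] at ih ⊢
    simp only [C_eq_natCast] at ih ⊢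
    push_cast at ih ⊢
    linear_combination ih

theorem hilbert_numerator_identity (c s : ℕ) (hs : 1 ≤ s) :
    (1 - Polynomial.X) ^ (c + 1) *
        ∑ j ∈ Finset.range s, Polynomial.C (((c + j).choose j : ℚ)) * Polynomial.X ^ j =
      F s c := by
  have hq0 : ∀ q : ℕ, ((q : ℚ) + s) ≠ 0 := by
    intro q
    have : ((q + s : ℕ) : ℚ) ≠ 0 := by exact_mod_cast (by omega : q + s ≠ 0)
    push_cast at this
    exact this
  have hdF : derivative (F s c) =
      -(Polynomial.C ((s : ℚ) * ((s + c).choose c : ℚ))) * ((1 - X) ^ c * X ^ (s - 1)) := by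
    rw [F, derivative_sub, derivative_one, derivative_C_mul, derivative_sum]
    have hterm : ∀ q ∈ Finset.range (c + 1),
        derivative (Polynomial.C ((-1 : ℚ) ^ q * (c.choose q : ℚ) / (q + s)) * X ^ (q + s))
          = Polynomial.C ((-1 : ℚ) ^ q * (c.choose q : ℚ)) * X ^ q * X ^ (s - 1) := by
      intro q _
      rw [derivative_C_mul, derivative_X_pow,
        show ((q + s : ℕ) : ℚ) = ((q : ℚ) + s) by push_cast; ring,
        show q + s - 1 = q + (s - 1) by omega, pow_add, ← mul_assoc, ← map_mul,
        div_mul_cancel₀ _ (hq0 q)]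
      ring
    rw [Finset.sum_congr rfl hterm, ← Finset.sum_mul, ← one_sub_X_pow]
    ring
  have hdL : derivative ((1 - X) ^ (c + 1) *
      ∑ j ∈ Finset.range s, Polynomial.C (((c + j).choose j : ℚ)) * X ^ j) =
      -(Polynomial.C ((s : ℚ) * ((s + c).choose c : ℚ))) * ((1 - X) ^ c * X ^ (s - 1)) := by
    have hG := Gkey c s hs
    rw [derivative_mul, derivative_pow, derivative_sub, derivative_one, derivative_X]
    simp only [Nat.add_sub_cancel]
    push_cast at hG ⊢
    simp only [map_mul, map_add, map_one, C_eq_natCast] at hG ⊢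
    push_cast at hG ⊢
    linear_combination (1 - X : ℚ[X]) ^ c * hG
  have hd0 : derivative ((1 - X) ^ (c + 1) *
      (∑ j ∈ Finset.range s, Polynomial.C (((c + j).choose j : ℚ)) * X ^ j) - F s c) = 0 := by
    rw [derivative_sub, hdL, hdF, sub_self]
  have e1 : Polynomial.eval 0 ((1 - X : ℚ[X]) ^ (c + 1) *
      ∑ j ∈ Finset.range s, Polynomial.C (((c + j).choose j : ℚ)) * X ^ j) = 1 := by
    rw [eval_mul, eval_pow, eval_sub, eval_one, eval_X, sub_zero, one_pow, one_mul,
      eval_finset_sum]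
    rw [Finset.sum_eq_single 0]
    · simp
    · intro j _ hj
      simp [zero_pow hj]
    · intro h
      exact absurd (Finset.mem_range.2 hs) h
  have e2 : Polynomial.eval 0 (F s c) = 1 := by
    rw [F, eval_sub, eval_one, eval_mul, eval_finset_sum]
    rw [Finset.sum_eq_zero (fun q _ => by simp [zero_pow (by omega : q + s ≠ 0)])]
    simp
  have h := eq_C_of_derivative_eq_zero hd0
  rw [coeff_zero_eq_eval_zero, eval_sub, e1, e2, sub_self, map_zero] at h
  exact sub_eq_zero.mp h
end
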